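/- arXiv:1602.01860 — 3 statements merged into one kernel-verified Lean document; each statement's English description precedes it below -/
import Mathlib

section
/- Let Z : [0,∞) → G be continuous and satisfy conditions (3) and (4) of the boundary jitter property on [0,∞), suppose Z(0) ∈ N*, and let T ∈ (0,∞) be such that I(Z(t)) ⊊ I(Z(0)) for all t ∈ (0,T). Then there exists a sequence T > χ₀ > u₁ ≥ χ₁ > u₂ ≥ χ₂ > ⋯ > 0 with χ_j → 0 as j → ∞ such that Z(χ₀) lies in the interior of G and for each j ≥ 1: Z(χ_j) ∈ ∂G, ⋃_{t∈[χ_j,u_j]} I(Z(t)) ⊆ I(Z(χ_j)), and ⋃_{t∈(u_j,χ_{j−1}]} I(Z(t)) ⊆ I(Z(χ_{j−1})). -/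
open scoped RealInnerProductSpace ENNReal NNReal
open Filter Topology Set MeasureTheory

noncomputable section

abbrev EucSp (J : ℕ) : Type := EuclideanSpace ℝ (Fin J)

/-- The convex cone generated by a set of vectors (by convention `coneGen ∅ = {0}`). -/
def coneGen {J : ℕ} (s : Set (EucSp J)) : Set (EucSp J) :=
  { y | ∃ (k : ℕ) (r : Fin k → ℝ) (v : Fin k → EucSp J),
      (∀ i, 0 ≤ r i) ∧ (∀ i, v i ∈ s) ∧ y = ∑ i, r i • v i }

/-- The polyhedral domain `G`. -/
def Gset {J N : ℕ} (n : Fin N → EucSp J) (c : Fin N → ℝ) : Set (EucSp J) :=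
  { x | ∀ i, c i ≤ ⟪x, n i⟫ }

/-- The active index set `I(x)`. -/
def ISet {J N : ℕ} (n : Fin N → EucSp J) (c : Fin N → ℝ) (x : EucSp J) : Set (Fin N) :=
  { i | ⟪x, n i⟫ = c i }

/-- The cone `d(x)` of admissible reflection directions at `x`. -/
def dCone {J N : ℕ} (n : Fin N → EucSp J) (c : Fin N → ℝ) (d : Fin N → EucSp J)
    (x : EucSp J) : Set (EucSp J) :=
  coneGen (d '' ISet n c x)

/-- `(Z, Y)` solves the extended Skorokhod problem for `X`. -/
def SolvesESP {J N : ℕ} (n : Fin N → EucSp J) (c : Fin N → ℝ) (d : Fin N → EucSp J)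
    (X Z Y : ℝ → EucSp J) : Prop :=
  ContinuousOn Z (Ici 0) ∧ ContinuousOn Y (Ici 0) ∧
  Y 0 ∈ dCone n c d (Z 0) ∧
  (∀ t ∈ Ici (0:ℝ), Z t = X t + Y t) ∧
  (∀ t ∈ Ici (0:ℝ), Z t ∈ Gset n c) ∧
  (∀ s t : ℝ, 0 ≤ s → s < t →
    Y t - Y s ∈ coneGen (⋃ u ∈ Ioc s t, dCone n c d (Z u)))

/-- Assumption (B). -/
def AssumptionB {J N : ℕ} (n d : Fin N → EucSp J) : Prop :=
  ∃ δ : ℝ, 0 < δ ∧ ∃ B : Set (EucSp J),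
    IsCompact B ∧ Convex ℝ B ∧ (∀ z ∈ B, -z ∈ B) ∧ (0 : EucSp J) ∈ interior B ∧
    ∀ i : Fin N, ∀ z ∈ frontier B, |⟪z, n i⟫| < δ →
      ∀ ν : EucSp J, ‖ν‖ = 1 → (∀ y ∈ B, 0 ≤ ⟪ν, y - z⟫) → ⟪ν, d i⟫ = 0

/-- Assumption (π). -/
def AssumptionPi {J N : ℕ} (n : Fin N → EucSp J) (c : Fin N → ℝ) (d : Fin N → EucSp J)
    (proj : EucSp J → EucSp J) : Prop :=
  (∀ x, proj x ∈ Gset n c) ∧ (∀ x ∈ Gset n c, proj x = x) ∧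
  (∀ x, x ∉ Gset n c → proj x - x ∈ dCone n c d (proj x))

/-- The supremum norm `‖f‖_T` of `f` over `[0, T]`. -/
def supNorm {J : ℕ} (f : ℝ → EucSp J) (T : ℝ) : ℝ :=
  ⨆ s : Icc (0:ℝ) T, ‖f s.1‖

/-- The subspace (as a set) `H_x`. -/
def Hset {J N : ℕ} (n : Fin N → EucSp J) (c : Fin N → ℝ) (x : EucSp J) : Set (EucSp J) :=
  { y | ∀ i ∈ ISet n c x, ⟪y, n i⟫ = 0 }

/-- The smooth part `S` of the boundary. -/
def Sstar {J N : ℕ} (n : Fin N → EucSp J) (c : Fin N → ℝ) : Set (EucSp J) :=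
  { x ∈ frontier (Gset n c) | (ISet n c x).ncard = 1 }

/-- The nonsmooth part `N` of the boundary. -/
def Nstar {J N : ℕ} (n : Fin N → EucSp J) (c : Fin N → ℝ) : Set (EucSp J) :=
  { x ∈ frontier (Gset n c) | 2 ≤ (ISet n c x).ncard }

/-- The set `W`. -/
def Wstar {J N : ℕ} (n : Fin N → EucSp J) (c : Fin N → ℝ) (d : Fin N → EucSp J) :
    Set (EucSp J) :=
  { x ∈ Nstar n c | Submodule.span ℝ (Hset n c x ∪ dCone n c d x) ≠ ⊤ }

/-- The boundary jitter property on `[0, T)`. -/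
def Jitter {J N : ℕ} (n : Fin N → EucSp J) (c : Fin N → ℝ) (Z Y : ℝ → EucSp J)
    (T : ℝ≥0∞) : Prop :=
  (∀ t : ℝ, 0 ≤ t → ENNReal.ofReal t < T → Z t ∈ Sstar n c →
    ∀ s u : ℝ, s < t → t < u → ENNReal.ofReal u < T →
      ∃ a ∈ Ioo (max s 0) u, ∃ b ∈ Ioo (max s 0) u, Y a ≠ Y b) ∧
  (volume {t : ℝ | 0 ≤ t ∧ ENNReal.ofReal t < T ∧ Z t ∈ Nstar n c} = 0) ∧
  (Z 0 ∈ Nstar n c →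
    ∀ i ∈ ISet n c (Z 0), ∀ δ : ℝ, 0 < δ → ENNReal.ofReal δ < T →
      ∃ u ∈ Ioo (0:ℝ) δ, ISet n c (Z u) = {i}) ∧
  (∀ t : ℝ, 0 < t → ENNReal.ofReal t < T → Z t ∈ Nstar n c →
    ∀ i ∈ ISet n c (Z t), ∀ δ : ℝ, 0 < δ → δ < t →
      ∃ s ∈ Ioo (t - δ) t, ISet n c (Z s) = {i})

/-- `f` is right-continuous with finite left limits on `[0, T)`. -/
def DrOn {J : ℕ} (f : ℝ → EucSp J) (T : ℝ≥0∞) : Prop :=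
  (∀ t : ℝ, 0 ≤ t → ENNReal.ofReal t < T → Tendsto f (𝓝[>] t) (𝓝 (f t))) ∧
  (∀ t : ℝ, 0 < t → ENNReal.ofReal t < T → ∃ L, Tendsto f (𝓝[<] t) (𝓝 L))

/-- `f ∈ D_{ℓ,r}([0,T))`. -/
def DlrOn {J : ℕ} (f : ℝ → EucSp J) (T : ℝ≥0∞) : Prop :=
  (∀ t : ℝ, 0 < t → ENNReal.ofReal t < T → ∃ L, Tendsto f (𝓝[<] t) (𝓝 L)) ∧
  (∀ t : ℝ, 0 ≤ t → ENNReal.ofReal t < T → ∃ L, Tendsto f (𝓝[>] t) (𝓝 L)) ∧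
  (∀ t : ℝ, 0 < t → ENNReal.ofReal t < T →
    Tendsto f (𝓝[<] t) (𝓝 (f t)) ∨ Tendsto f (𝓝[>] t) (𝓝 (f t)))

/-- `(φ, η)` solves the derivative problem associated with `Z` for `ψ` on `[0, T)`. -/
def SolvesDPOn {J N : ℕ} (n : Fin N → EucSp J) (c : Fin N → ℝ) (d : Fin N → EucSp J)
    (Z ψ φ η : ℝ → EucSp J) (T : ℝ≥0∞) : Prop :=
  DrOn φ T ∧ DrOn η T ∧
  η 0 ∈ Submodule.span ℝ (dCone n c d (Z 0)) ∧
  (∀ t : ℝ, 0 ≤ t → ENNReal.ofReal t < T →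
    φ t = ψ t + η t ∧ φ t ∈ Hset n c (Z t)) ∧
  (∀ s t : ℝ, 0 ≤ s → s < t → ENNReal.ofReal t < T →
    η t - η s ∈ Submodule.span ℝ (⋃ u ∈ Ioc s t, dCone n c d (Z u)))

/-- Decomposition `Y = R L` where the components of `L` are nondecreasing and can
increase only when `Z` is on the corresponding face. -/
def LocalTimeProps {J N : ℕ} (n : Fin N → EucSp J) (c : Fin N → ℝ) (d : Fin N → EucSp J)
    (Z Y : ℝ → EucSp J) (L : ℝ → EucSp N) : Prop :=
  ContinuousOn L (Ici 0) ∧ L 0 = 0 ∧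
  (∀ t ∈ Ici (0:ℝ), ∀ i, 0 ≤ L t i) ∧
  (∀ i, MonotoneOn (fun t => L t i) (Ici 0)) ∧
  (∀ t ∈ Ici (0:ℝ), Y t = ∑ i, L t i • d i) ∧
  (∀ i : Fin N, ∀ s t : ℝ, 0 ≤ s → s ≤ t →
    (∀ u ∈ Icc s t, Z u ∉ {x ∈ frontier (Gset n c) | ⟪x, n i⟫ = c i}) →
    L s i = L t i)

/-- The dual set `B*`. -/
def dualSet {J : ℕ} (B : Set (EucSp J)) : Set (EucSp J) :=
  { y | ∀ z ∈ B, ⟪y, z⟫ ≤ 1 }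

/-- `frontComp Ls k y = Ls 0 (Ls 1 (⋯ (Ls (k-1) y)))`. -/
def frontComp {J : ℕ} (Ls : ℕ → (EucSp J → EucSp J)) : ℕ → EucSp J → EucSp J
  | 0, y => y
  | (k+1), y => frontComp Ls k (Ls k y)

/-- `backComp Ls k y = Ls (k-1) (⋯ (Ls 0 y))`. -/
def backComp {J : ℕ} (Ls : ℕ → (EucSp J → EucSp J)) : ℕ → EucSp J → EucSp J
  | 0, y => y
  | (k+1), y => Ls k (backComp Ls k y)

/-! Write `I(t)` for the active set of `Z t`; each `{t ≥ 0 | i ∈ I(t)}` is closed since `Z`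
is continuous. Let `i ≠ j` be active at `0`. By condition (3) there are `v' < v < T` with
`I(v') = {j}` and `I(v) = {i}`; if `I` never vanished between `v'` and the first time `w > v'`
at which `i` is active, another face would be active at `w` too, and condition (4) would make
`i` active just before `w`. This gives `χ₀`.

Given `a`, let `u` be the last time before `a` at which a face inactive at `a` is active (there
is one, by condition (3) and `I(a) ⊊ I(0)`), and let `χ` be the least `s ≤ u` with `I(t) ⊆ I(s)`
on `[s, u]`. Condition (3) and `I(s) ⊊ I(0)` keep `χ` away from `0`. If the iterates `χ_j`
decreased to `L > 0`, then near `L` only faces of `I(L)` are active, so `L` would compete in the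
minimisation defining `χ_j` for large `j`. -/

lemma IsClosed.exists_first_mem_Icc {S : Set ℝ} (hS : IsClosed S) {p q : ℝ}
    (hpq : p ≤ q) (hq : q ∈ S) : ∃ w ∈ Icc p q, w ∈ S ∧ ∀ t ∈ Ico p w, t ∉ S := by
  have hbdd : BddBelow (S ∩ Icc p q) := ⟨p, fun t ht => ht.2.1⟩
  have hmem := (hS.inter isClosed_Icc).csInf_mem ⟨q, hq, hpq, le_rfl⟩ hbdd
  exact ⟨_, hmem.2, hmem.1, fun t ht htS =>
    (csInf_le hbdd ⟨htS, ht.1, ht.2.le.trans hmem.2.2⟩).not_gt ht.2⟩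

lemma IsClosed.exists_last_mem_Icc {S : Set ℝ} (hS : IsClosed S) {p q : ℝ}
    (hpq : p ≤ q) (hp : p ∈ S) : ∃ w ∈ Icc p q, w ∈ S ∧ ∀ t ∈ Ioc w q, t ∉ S := by
  have hbdd : BddAbove (S ∩ Icc p q) := ⟨q, fun t ht => ht.2.2⟩
  have hmem := (hS.inter isClosed_Icc).csSup_mem ⟨p, hp, le_rfl, hpq⟩ hbdd
  exact ⟨_, hmem.2, hmem.1, fun t ht htS =>
    (le_csSup hbdd ⟨htS, hmem.2.1.trans ht.1.le, ht.2⟩).not_gt ht.1⟩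

section Polyhedron

variable {J N : ℕ} {n : Fin N → EucSp J} {c : Fin N → ℝ}

lemma isClosed_Gset : IsClosed (Gset n c) := by
  simp only [Gset, ofPred_forall]
  exact isClosed_iInter fun i => isClosed_le continuous_const (continuous_id.inner continuous_const)

lemma mem_interior_Gset_of_ISet_eq_empty {x : EucSp J} (hx : x ∈ Gset n c)
    (hI : ISet n c x = ∅) : x ∈ interior (Gset n c) := by
  have hopen : IsOpen {y : EucSp J | ∀ i, c i < ⟪y, n i⟫} := by
    simp only [ofPred_forall]
    exact isOpen_iInter_of_finite fun i =>
      isOpen_lt continuous_const (continuous_id.inner continuous_const)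
  refine interior_maximal (fun y hy i => (hy i).le) hopen fun i => (hx i).lt_of_ne fun h => ?_
  have hi : i ∈ ISet n c x := h.symm
  rw [hI] at hi
  exact hi

lemma mem_frontier_Gset_of_mem_ISet {x : EucSp J} {i : Fin N} (hni : n i ≠ 0)
    (hx : x ∈ Gset n c) (hi : i ∈ ISet n c x) : x ∈ frontier (Gset n c) := by
  rw [isClosed_Gset.frontier_eq]
  refine ⟨hx, fun hint => ?_⟩
  have hlim : Tendsto (fun t : ℝ => x - t • n i) (𝓝[>] 0) (𝓝 x) := by
    refine (Continuous.tendsto' ?_ 0 x (by simp)).mono_left nhdsWithin_le_nhds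
    fun_prop
  obtain ⟨t, ht, ht0⟩ :=
    ((hlim.eventually (isOpen_interior.mem_nhds hint)).and self_mem_nhdsWithin).exists
  have hle := interior_subset ht i
  rw [inner_sub_left, real_inner_smul_left, hi, real_inner_self_eq_norm_sq] at hle
  have hpos : 0 < ‖n i‖ ^ 2 := by positivity
  nlinarith [ht0]

lemma mem_Nstar_of_two_le_ncard {x : EucSp J} (hn : ∀ i, n i ≠ 0) (hx : x ∈ Gset n c)
    (h2 : 2 ≤ (ISet n c x).ncard) : x ∈ Nstar n c := by
  obtain ⟨i, hi⟩ := nonempty_of_ncard_ne_zero (by omega : (ISet n c x).ncard ≠ 0)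
  exact ⟨mem_frontier_Gset_of_mem_ISet (hn i) hx hi, h2⟩

lemma isClosed_Ici_inter_ISet {Z : ℝ → EucSp J} (hZ : ContinuousOn Z (Ici 0)) (i : Fin N) :
    IsClosed (Ici 0 ∩ {t | i ∈ ISet n c (Z t)}) :=
  (hZ.inner continuousOn_const).preimage_isClosed_of_isClosed isClosed_Ici isClosed_singleton

end Polyhedron

section ActiveSets

variable {ι : Type*}

def ActiveSetsClosed (act : ℝ → Set ι) : Prop :=
  ∀ i, IsClosed (Ici 0 ∩ {t | i ∈ act t})

def JitterAtZero (act : ℝ → Set ι) : Prop :=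
  ∀ i ∈ act 0, ∀ δ : ℝ, 0 < δ → ∃ s ∈ Ioo 0 δ, act s = {i}

def JitterFromLeft (act : ℝ → Set ι) : Prop :=
  ∀ t : ℝ, 0 < t → 2 ≤ (act t).ncard → ∀ i ∈ act t, ∀ δ : ℝ, 0 < δ → δ < t →
    ∃ s ∈ Ioo (t - δ) t, act s = {i}

def dominatingTimes (act : ℝ → Set ι) (u : ℝ) : Set ℝ :=
  {s | 0 < s ∧ s ≤ u ∧ ∀ t ∈ Icc s u, act t ⊆ act s}

variable {act : ℝ → Set ι}

lemma mem_dominatingTimes_of_mem_closure (hclosed : ActiveSetsClosed act) {u s : ℝ}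
    (hs : s ∈ closure (dominatingTimes act u)) (hs0 : 0 < s) : s ∈ dominatingTimes act u := by
  have hsu : s ≤ u := closure_minimal (fun r hr => hr.2.1) isClosed_Iic hs
  refine ⟨hs0, hsu, fun t ht i hi => ?_⟩
  rcases ht.1.eq_or_lt with rfl | hst
  · exact hi
  · have hsub : Iio t ∩ dominatingTimes act u ⊆ Ici 0 ∩ {r | i ∈ act r} :=
      fun r hr => ⟨hr.2.1.le, hr.2.2.2 t ⟨hr.1.le, ht.2⟩ hi⟩
    exact ((hclosed i).closure_subset_iff.2 hsub (isOpen_Iio.inter_closure ⟨hst, hs⟩)).2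

variable [Finite ι]

lemma exists_act_eq_empty (hclosed : ActiveSetsClosed act) (hzero : JitterAtZero act)
    (hleft : JitterFromLeft act) (h2 : 2 ≤ (act 0).ncard) {T : ℝ} (hT : 0 < T) :
    ∃ χ ∈ Ioo 0 T, act χ = ∅ := by
  obtain ⟨i, hi, j, hj, hij⟩ := (one_lt_ncard (toFinite _)).1 h2
  obtain ⟨v, hv, hvi⟩ := hzero i hi T hT
  obtain ⟨v', hv', hv'j⟩ := hzero j hj v hv.1
  obtain ⟨w, hw, hwi, hbefore⟩ :=
    (hclosed i).exists_first_mem_Icc hv'.2.le ⟨hv.1.le, by simp [hvi]⟩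
  have hv'w : v' < w := hw.1.lt_of_ne fun h => hij (by simpa [← h, hv'j] using hwi.2)
  by_contra! hne
  set M := ⋃ k ∈ {k | k ≠ i}, Ici 0 ∩ {t | k ∈ act t}
  -- on `(v', w)` the face `i` is inactive, so some other face is active, also at `w`
  have hwM : w ∈ M := by
    have hsub : Ioo v' w ⊆ M := fun t ht => by
      obtain ⟨k, hk⟩ := hne t ⟨hv'.1.trans ht.1, ht.2.trans (hw.2.trans_lt hv.2)⟩
      have hki : k ≠ i := by
        rintro rfl
        exact hbefore t ⟨ht.1.le, ht.2⟩ ⟨(hv'.1.trans ht.1).le, hk⟩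
      exact mem_biUnion hki ⟨(hv'.1.trans ht.1).le, hk⟩
    have hM : IsClosed M := (toFinite _).isClosed_biUnion fun k _ => hclosed k
    exact hM.closure_subset_iff.2 hsub (by simp [closure_Ioo hv'w.ne, hv'w.le])
  obtain ⟨k, hki, -, hk⟩ := mem_iUnion₂.1 hwM
  have hw2 : 2 ≤ (act w).ncard := (one_lt_ncard (toFinite _)).2 ⟨i, hwi.2, k, hk, Ne.symm hki⟩
  obtain ⟨s, ⟨hvs, hsw⟩, hsi⟩ :=
    hleft w (hv'.1.trans hv'w) hw2 i hwi.2 (w - v') (by linarith) (by linarith [hv'.1])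
  rw [sub_sub_cancel] at hvs
  exact hbefore s ⟨hvs.le, hsw⟩ ⟨(hv'.1.trans hvs).le, by simp [hsi]⟩

lemma exists_last_exit (hclosed : ActiveSetsClosed act) (hzero : JitterAtZero act) {a : ℝ}
    (ha : 0 < a) (hsub : act a ⊂ act 0) :
    ∃ u ∈ Ioo 0 a, (act u).Nonempty ∧ ∀ t ∈ Ioc u a, act t ⊆ act a := by
  obtain ⟨i, hi0, hia⟩ := exists_of_ssubset hsub
  obtain ⟨v, hv, hvi⟩ := hzero i hi0 a ha
  set S := ⋃ k ∈ (act a)ᶜ, Ici 0 ∩ {t | k ∈ act t}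
  have hS : IsClosed S := (toFinite _).isClosed_biUnion fun k _ => hclosed k
  obtain ⟨u, hu, huS, hafter⟩ :=
    hS.exists_last_mem_Icc hv.2.le (mem_biUnion hia ⟨hv.1.le, by simp [hvi]⟩)
  obtain ⟨k, hka, -, hk⟩ := mem_iUnion₂.1 huS
  have hua : u < a := hu.2.lt_of_ne fun h => hka (h ▸ hk)
  refine ⟨u, ⟨hv.1.trans_le hu.1, hua⟩, ⟨k, hk⟩, fun t ht l hl => ?_⟩
  by_contra hla
  exact hafter t ht (mem_biUnion hla ⟨(hv.1.le.trans hu.1).trans ht.1.le, hl⟩)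

lemma zero_notMem_closure_dominatingTimes (hzero : JitterAtZero act) {u : ℝ} (hu : 0 < u)
    (hstrict : ∀ t ∈ Ioc 0 u, act t ⊂ act 0) : (0 : ℝ) ∉ closure (dominatingTimes act u) := by
  intro h0
  -- each face of `act 0` is active alone at some time in `(0, u)`, hence at all earlier
  -- dominating times
  have hev : ∀ᶠ s in 𝓝 (0 : ℝ), ∀ i, s ∈ dominatingTimes act u → i ∈ act 0 → i ∈ act s := by
    refine eventually_all.2 fun i => ?_
    by_cases hi : i ∈ act 0
    · obtain ⟨v, hv, hvi⟩ := hzero i hi u hu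
      filter_upwards [Iio_mem_nhds hv.1] with s hsv hs _
      exact hs.2.2 v ⟨hsv.le, hv.2.le⟩ (by simp [hvi])
    · exact .of_forall fun _ _ h => absurd h hi
  obtain ⟨s, hsub, hs⟩ := (hev.and_frequently (mem_closure_iff_frequently.1 h0)).exists
  exact (hstrict s ⟨hs.1, hs.2.1⟩).not_subset fun i => hsub i hs

lemma isLeast_sInf_dominatingTimes (hclosed : ActiveSetsClosed act) (hzero : JitterAtZero act)
    {u : ℝ} (hu : 0 < u) (hstrict : ∀ t ∈ Ioc 0 u, act t ⊂ act 0) :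
    IsLeast (dominatingTimes act u) (sInf (dominatingTimes act u)) := by
  have hne : (dominatingTimes act u).Nonempty :=
    ⟨u, hu, le_rfl, fun t ht => by rw [le_antisymm ht.2 ht.1]⟩
  have hbdd : BddBelow (dominatingTimes act u) := ⟨0, fun s hs => hs.1.le⟩
  have hmem := csInf_mem_closure hne hbdd
  have hpos : 0 < sInf (dominatingTimes act u) :=
    (le_csInf hne fun s hs => hs.1.le).lt_of_ne fun h =>
      zero_notMem_closure_dominatingTimes hzero hu hstrict (h ▸ hmem)
  exact ⟨mem_dominatingTimes_of_mem_closure hclosed hmem hpos, fun s hs => csInf_le hbdd hs⟩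

lemma eventually_act_subset (hclosed : ActiveSetsClosed act) (L : ℝ) :
    ∀ᶠ t in 𝓝 L, 0 ≤ t → act t ⊆ act L := by
  have hev : ∀ᶠ t in 𝓝 L, ∀ i, i ∉ act L → t ∉ Ici 0 ∩ {r | i ∈ act r} := by
    refine eventually_all.2 fun i => ?_
    by_cases hi : i ∈ act L
    · exact .of_forall fun _ h => absurd hi h
    · filter_upwards [(hclosed i).isOpen_compl.mem_nhds fun h => hi h.2] with t ht _
      exact ht
  filter_upwards [hev] with t ht ht0 i hi
  by_contra h
  exact ht i h ⟨ht0, hi⟩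

lemma tendsto_zero_of_isLeast_dominatingTimes (hclosed : ActiveSetsClosed act) {χ u : ℕ → ℝ}
    (hχ0 : 0 < χ 0) (hu : ∀ j, u j < χ j)
    (hleast : ∀ j, IsLeast (dominatingTimes act (u j)) (χ (j + 1))) :
    Tendsto χ atTop (𝓝 0) := by
  have hpos : ∀ j, 0 < χ j := fun j => by
    cases j with
    | zero => exact hχ0
    | succ j => exact (hleast j).1.1
  have hanti : StrictAnti χ := strictAnti_nat_of_succ_lt fun j => (hleast j).1.2.1.trans_lt (hu j)
  have hbdd : BddBelow (range χ) := ⟨0, by rintro _ ⟨j, rfl⟩; exact (hpos j).le⟩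
  have hlim := tendsto_atTop_ciInf hanti.antitone hbdd
  set L := ⨅ j, χ j
  have hL : ∀ j, L < χ j := fun j => (ciInf_le hbdd (j + 1)).trans_lt (hanti (lt_add_one j))
  suffices L = 0 by rwa [this] at hlim
  refine le_antisymm (not_lt.1 fun hLpos => ?_) (le_ciInf fun j => (hpos j).le)
  obtain ⟨a, b, hLab, hab, hsub⟩ :=
    exists_Icc_mem_subset_of_mem_nhds (eventually_act_subset hclosed L)
  obtain ⟨j, hj⟩ := (hlim.eventually hab).exists
  -- near `L` only faces of `act L` are active, so `L` dominates on `[L, u j]`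
  have hLmem : L ∈ dominatingTimes act (u j) :=
    ⟨hLpos, (hL (j + 1)).le.trans (hleast j).1.2.1, fun t ht =>
      hsub ⟨hLab.1.trans ht.1, (ht.2.trans (hu j).le).trans hj.2⟩ (hLpos.le.trans ht.1)⟩
  exact ((hleast j).2 hLmem).not_gt (hL (j + 1))

theorem exists_nested_times (hclosed : ActiveSetsClosed act) (hzero : JitterAtZero act)
    (hleft : JitterFromLeft act) (h2 : 2 ≤ (act 0).ncard) {T : ℝ} (hT : 0 < T)
    (hstrict : ∀ t ∈ Ioo 0 T, act t ⊂ act 0) :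
    ∃ χ u : ℕ → ℝ, χ 0 ∈ Ioo 0 T ∧ (∀ j, u j < χ j ∧ χ (j + 1) ≤ u j ∧ 0 < χ (j + 1)) ∧
      Tendsto χ atTop (𝓝 0) ∧ act (χ 0) = ∅ ∧
      ∀ j, (act (χ (j + 1))).Nonempty ∧
        (∀ t ∈ Icc (χ (j + 1)) (u j), act t ⊆ act (χ (j + 1))) ∧
        ∀ t ∈ Ioc (u j) (χ j), act t ⊆ act (χ j) := by
  obtain ⟨χ₀, hχ₀, hχ₀act⟩ := exists_act_eq_empty hclosed hzero hleft h2 hT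
  choose! U hU hUact hUsub using fun a (ha : a ∈ Ioo 0 T) =>
    exists_last_exit hclosed hzero ha.1 (hstrict a ha)
  have hleast : ∀ a ∈ Ioo 0 T,
      IsLeast (dominatingTimes act (U a)) (sInf (dominatingTimes act (U a))) := fun a ha =>
    isLeast_sInf_dominatingTimes hclosed hzero (hU a ha).1 fun t ht =>
      hstrict t ⟨ht.1, ht.2.trans_lt ((hU a ha).2.trans ha.2)⟩
  let χ : ℕ → ℝ := fun j => Nat.rec χ₀ (fun _ a => sInf (dominatingTimes act (U a))) j
  have hχ : ∀ j, χ j ∈ Ioo 0 T := fun j => by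
    induction j with
    | zero => exact hχ₀
    | succ j ih =>
      exact ⟨(hleast _ ih).1.1, ((hleast _ ih).1.2.1.trans_lt (hU _ ih).2).trans ih.2⟩
  refine ⟨χ, fun j => U (χ j), hχ₀,
    fun j => ⟨(hU _ (hχ j)).2, (hleast _ (hχ j)).1.2.1, (hχ (j + 1)).1⟩,
    tendsto_zero_of_isLeast_dominatingTimes hclosed hχ₀.1 (fun j => (hU _ (hχ j)).2)
      (fun j => hleast _ (hχ j)),
    hχ₀act, fun j => ?_⟩
  obtain ⟨-, hχu, hdom⟩ := (hleast _ (hχ j)).1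
  exact ⟨(hUact _ (hχ j)).mono (hdom _ ⟨hχu, le_rfl⟩), hdom, hUsub _ (hχ j)⟩

end ActiveSets

-- `u j` and `χ (j + 1)` are the paper's `u_{j+1}` and `χ_{j+1}`.
theorem statement8_general (J N : ℕ)
    (n : Fin N → EucSp J) (c : Fin N → ℝ)
    (hn : ∀ i, ‖n i‖ = 1)
    (Z : ℝ → EucSp J)
    (hZcont : ContinuousOn Z (Ici 0))
    (hZG : ∀ t : ℝ, 0 ≤ t → Z t ∈ Gset n c)
    -- condition (3) of the boundary jitter property on `[0,∞)`
    (hjit3 : Z 0 ∈ Nstar n c →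
      ∀ i ∈ ISet n c (Z 0), ∀ δ : ℝ, 0 < δ →
        ∃ u ∈ Ioo (0:ℝ) δ, ISet n c (Z u) = {i})
    -- condition (4) of the boundary jitter property on `[0,∞)`
    (hjit4 : ∀ t : ℝ, 0 < t → Z t ∈ Nstar n c →
      ∀ i ∈ ISet n c (Z t), ∀ δ : ℝ, 0 < δ → δ < t →
        ∃ s ∈ Ioo (t - δ) t, ISet n c (Z s) = {i})
    (hZ0 : Z 0 ∈ Nstar n c)
    (T : ℝ) (hT : 0 < T)
    (hstrict : ∀ t ∈ Ioo (0:ℝ) T, ISet n c (Z t) ⊂ ISet n c (Z 0)) :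
    ∃ χ u : ℕ → ℝ,
      χ 0 < T ∧
      (∀ j : ℕ, u j < χ j ∧ χ (j + 1) ≤ u j ∧ 0 < χ (j + 1)) ∧
      Tendsto χ atTop (𝓝 0) ∧
      Z (χ 0) ∈ interior (Gset n c) ∧
      ∀ j : ℕ,
        Z (χ (j + 1)) ∈ frontier (Gset n c) ∧
        (∀ t ∈ Icc (χ (j + 1)) (u j), ISet n c (Z t) ⊆ ISet n c (Z (χ (j + 1)))) ∧
        (∀ t ∈ Ioc (u j) (χ j), ISet n c (Z t) ⊆ ISet n c (Z (χ j))) := by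
  have hn0 : ∀ i, n i ≠ 0 := fun i => norm_ne_zero_iff.1 (by simp [hn i])
  obtain ⟨χ, u, hχ0, horder, hlim, hχ0act, hact⟩ :=
    exists_nested_times (act := fun t => ISet n c (Z t)) (isClosed_Ici_inter_ISet hZcont)
      (hjit3 hZ0) (fun t ht h2 => hjit4 t ht (mem_Nstar_of_two_le_ncard hn0 (hZG t ht.le) h2))
      hZ0.2 hT hstrict
  refine ⟨χ, u, hχ0.2, horder, hlim,
    mem_interior_Gset_of_ISet_eq_empty (hZG _ hχ0.1.le) hχ0act, fun j => ⟨?_, (hact j).2⟩⟩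
  obtain ⟨i, hi⟩ := (hact j).1
  exact mem_frontier_Gset_of_mem_ISet (hn0 i) (hZG _ (horder j).2.2.le) hi

/-- **Lemma (oscillation structure after starting at the nonsmooth boundary).**
If a continuous `Z : [0,∞) → G` satisfies conditions (3) and (4) of the boundary jitter
property, `Z 0 ∈ N*` and `I(Z t) ⊊ I(Z 0)` on `(0,T)`, then there is a nested decreasing
sequence `T > χ₀ > u₁ ≥ χ₁ > u₂ ≥ χ₂ > ⋯ > 0` with `χ_j → 0`, `Z χ₀ ∈ G°`, `Z χ_j ∈ ∂G`
for `j ≥ 1`, and the stated inclusions of active index sets.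
(Here `u j` plays the role of `u_{j+1}` and `χ (j+1)` of `χ_{j+1}`.) -/
theorem statement8 (J N : ℕ) (hJ : 1 ≤ J) (hN : 1 ≤ N)
    (n d : Fin N → EucSp J) (c : Fin N → ℝ)
    (hn : ∀ i, ‖n i‖ = 1) (hdn : ∀ i, ⟪d i, n i⟫ = 1)
    (hGne : (Gset n c).Nonempty)
    (Z : ℝ → EucSp J)
    (hZcont : ContinuousOn Z (Ici 0))
    (hZG : ∀ t : ℝ, 0 ≤ t → Z t ∈ Gset n c)
    -- condition (3) of the boundary jitter property on `[0,∞)`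
    (hjit3 : Z 0 ∈ Nstar n c →
      ∀ i ∈ ISet n c (Z 0), ∀ δ : ℝ, 0 < δ →
        ∃ u ∈ Ioo (0:ℝ) δ, ISet n c (Z u) = {i})
    -- condition (4) of the boundary jitter property on `[0,∞)`
    (hjit4 : ∀ t : ℝ, 0 < t → Z t ∈ Nstar n c →
      ∀ i ∈ ISet n c (Z t), ∀ δ : ℝ, 0 < δ → δ < t →
        ∃ s ∈ Ioo (t - δ) t, ISet n c (Z s) = {i})
    (hZ0 : Z 0 ∈ Nstar n c)
    (T : ℝ) (hT : 0 < T)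
    (hstrict : ∀ t ∈ Ioo (0:ℝ) T, ISet n c (Z t) ⊂ ISet n c (Z 0)) :
    ∃ χ u : ℕ → ℝ,
      χ 0 < T ∧
      (∀ j : ℕ, u j < χ j ∧ χ (j + 1) ≤ u j ∧ 0 < χ (j + 1)) ∧
      Tendsto χ atTop (𝓝 0) ∧
      Z (χ 0) ∈ interior (Gset n c) ∧
      ∀ j : ℕ,
        Z (χ (j + 1)) ∈ frontier (Gset n c) ∧
        (∀ t ∈ Icc (χ (j + 1)) (u j), ISet n c (Z t) ⊆ ISet n c (Z (χ (j + 1)))) ∧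
        (∀ t ∈ Ioc (u j) (χ j), ISet n c (Z t) ⊆ ISet n c (Z (χ j))) :=
  statement8_general J N n c hn Z hZcont hZG hjit3 hjit4 hZ0 T hT hstrict
end
end

section
/- Suppose the ESP data satisfies Assumption (B). Then there exists κ_Λ ∈ (0,∞) such that for every continuous X with X(0) ∈ G and every solution (Z,Y) of the ESP for X: if (φ₁,η₁) solves the DP associated with Z for ψ₁ ∈ D_r and (φ₂,η₂) solves the DP associated with Z for ψ₂ ∈ D_r, then ‖φ₁ − φ₂‖_T ≤ κ_Λ‖ψ₁ − ψ₂‖_T for every T ∈ [0,∞). In particular, for each ψ ∈ D_r there is at most one solution of the DP associated with Z for ψ. -/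
open scoped RealInnerProductSpace ENNReal NNReal
open Filter Topology Set MeasureTheory

noncomputable section

/-
Measure vectors with the gauge `‖·‖_B` of the set `B` of Assumption (B). If `x` has
`‖x‖_B = 1` and every active normal `nᵢ` is nearly orthogonal to `x`, then `x` lies on the part
of `∂B` where Assumption (B) applies, so an inward normal of `B` at `x` is orthogonal to every
active direction `dᵢ`, and adding a combination of those directions cannot decrease the gauge.

Let `(φ, η)` solve the derivative problem for `ψ`, and suppose `‖φ(t)‖_B` is large compared with
the size of `ψ` on `[0, t]`. Let `σ` be the first time `s ≤ t` with `‖ψ(t) + η(s)‖_B ≥ ‖φ(t)‖_B`;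
by right continuity of `η` the infimum is attained. Because `φ(σ) ∈ H_{Z(σ)}`, the active normals
at `Z(σ)` see `ψ(t) + η(σ)` only through `ψ(t) - ψ(σ)`, so the gauge cannot drop along the
active directions at `Z(σ)`. If `σ = 0`, removing `η(0)` shows that `‖ψ(t)‖_B` is large, which
it is not. If `σ > 0`, the active set near `σ` is contained in the one at `σ`, so `η` moves only
along those directions just before `σ`, and an earlier time qualifies.
Since the derivative problem is linear, applying this to differences of two solutions gives the
Lipschitz bound, and uniqueness is the case `ψ₁ = ψ₂`.
-/

theorem IsGLB.le_of_continuousWithinAt_Ici {α β : Type*} [TopologicalSpace α] [LinearOrder α]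
    [OrderTopology α] [TopologicalSpace β] [Preorder β] [ClosedIciTopology β]
    {S : Set α} {σ : α} {h : α → β} {a : β} (hσ : IsGLB S σ) (hS : S.Nonempty)
    (hh : ContinuousWithinAt h (Ici σ) σ) (ha : ∀ s ∈ S, a ≤ h s) : a ≤ h σ :=
  (hh.tendsto.frequently ((hσ.frequently_mem hS).mono ha)).mem_of_closed isClosed_Ici

section SupportingNormal

variable {E : Type*} [NormedAddCommGroup E] [InnerProductSpace ℝ E] {B : Set E}

theorem Convex.exists_unit_normal_of_notMem_interior [CompleteSpace E] (hB : Convex ℝ B)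
    (hint : (interior B).Nonempty) {z : E} (hz : z ∉ interior B) :
    ∃ ν : E, ‖ν‖ = 1 ∧ ∀ y ∈ B, 0 ≤ ⟪ν, y - z⟫ := by
  obtain ⟨f, hf⟩ := geometric_hahn_banach_open_point hB.interior isOpen_interior hz
  have hfB : ∀ y ∈ B, f y ≤ f z := by
    have : closure (interior B) ⊆ {y | f y ≤ f z} :=
      closure_minimal (fun y hy => (hf y hy).le) (isClosed_le f.continuous continuous_const)
    rw [hB.closure_interior_eq_closure_of_nonempty_interior hint] at this
    exact fun y hy => this (subset_closure hy)
  set v := (InnerProductSpace.toDual ℝ E).symm f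
  have hv : ∀ y, ⟪v, y⟫ = f y := fun y => InnerProductSpace.toDual_symm_apply
  have hv0 : v ≠ 0 := by
    obtain ⟨a, ha⟩ := hint
    rintro hv0
    simpa [← hv, hv0] using hf a ha
  refine ⟨-(‖v‖⁻¹ • v), by simp [norm_smul, hv0], fun y hy => ?_⟩
  rw [inner_neg_left, real_inner_smul_left, inner_sub_right, hv, hv, neg_nonneg]
  exact mul_nonpos_of_nonneg_of_nonpos (by positivity) (sub_nonpos.2 (hfB y hy))

theorem inner_pos_of_mem_interior {ν z y : E} (hν : ν ≠ 0)
    (hnormal : ∀ y ∈ B, 0 ≤ ⟪ν, y - z⟫) (hy : y ∈ interior B) : 0 < ⟪ν, y - z⟫ := by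
  have hlim : Tendsto (fun s : ℝ => y - s • ν) (𝓝[>] 0) (𝓝 y) := by
    have : Continuous fun s : ℝ => y - s • ν := by fun_prop
    simpa using (this.tendsto 0).mono_left nhdsWithin_le_nhds
  obtain ⟨s, hsB, hs⟩ :=
    ((hlim.eventually_mem (mem_interior_iff_mem_nhds.1 hy)).and self_mem_nhdsWithin).exists
  have := hnormal _ hsB
  rw [sub_right_comm, inner_sub_right, real_inner_smul_right, sub_nonneg] at this
  exact (mul_pos hs (real_inner_self_pos.2 hν)).trans_le this

theorem gauge_le_gauge_add_of_mem_span [CompleteSpace E] {ι : Type*} (n d : ι → E) {δ : ℝ}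
    (hB : Convex ℝ B) (hB0 : B ∈ 𝓝 0)
    (hBcond : ∀ i, ∀ z ∈ frontier B, |⟪z, n i⟫| < δ →
      ∀ ν : E, ‖ν‖ = 1 → (∀ y ∈ B, 0 ≤ ⟪ν, y - z⟫) → ⟪ν, d i⟫ = 0)
    {I : Set ι} {x w : E} (hx : 0 < gauge B x) (hxI : ∀ i ∈ I, |⟪x, n i⟫| < δ * gauge B x)
    (hw : w ∈ Submodule.span ℝ (d '' I)) : gauge B x ≤ gauge B (x + w) := by
  set r := gauge B x
  set z := r⁻¹ • x
  have hz : gauge B z = 1 := by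
    rw [gauge_smul_of_nonneg (inv_nonneg.2 hx.le), smul_eq_mul, inv_mul_cancel₀ hx.ne']
  have hz_notMem : z ∉ interior B := fun h =>
    ((gauge_lt_one_iff_mem_interior hB hB0).2 h).ne hz
  obtain ⟨ν, hν, hnormal⟩ :=
    hB.exists_unit_normal_of_notMem_interior ⟨0, mem_interior_iff_mem_nhds.2 hB0⟩ hz_notMem
  have hνd : ∀ i ∈ I, ⟪ν, d i⟫ = 0 := fun i hi =>
    hBcond i z ((gauge_eq_one_iff_mem_frontier hB hB0).1 hz)
      (by rw [real_inner_smul_left, abs_mul, abs_of_pos (inv_pos.2 hx), inv_mul_lt_iff₀ hx,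
        mul_comm]; exact hxI i hi) ν hν hnormal
  have hνw : ⟪ν, w⟫ = 0 := by
    have : Submodule.span ℝ (d '' I) ≤ LinearMap.ker (innerₛₗ ℝ ν) :=
      Submodule.span_le.2 (by rintro _ ⟨i, hi, rfl⟩; exact hνd i hi)
    simpa using this hw
  by_contra! hlt
  have hzw : z + r⁻¹ • w ∈ interior B := by
    refine (gauge_lt_one_iff_mem_interior hB hB0).1 ?_
    rw [← smul_add, gauge_smul_of_nonneg (inv_nonneg.2 hx.le), smul_eq_mul,
      inv_mul_lt_iff₀ hx, mul_one]
    exact hlt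
  have := inner_pos_of_mem_interior (by rintro rfl; simp at hν) hnormal hzw
  rw [add_sub_cancel_left, real_inner_smul_right, hνw, mul_zero] at this
  exact lt_irrefl _ this

end SupportingNormal

section DerivativeProblem

variable {J N : ℕ} {n d : Fin N → EucSp J} {c : Fin N → ℝ}

theorem coneGen_subset_span (s : Set (EucSp J)) :
    coneGen s ⊆ (Submodule.span ℝ s : Set (EucSp J)) := by
  rintro y ⟨k, r, v, -, hv, rfl⟩
  exact Submodule.sum_mem _ fun i _ => Submodule.smul_mem _ _ (Submodule.subset_span (hv i))

theorem span_coneGen (s : Set (EucSp J)) : Submodule.span ℝ (coneGen s) = Submodule.span ℝ s := by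
  refine le_antisymm (Submodule.span_le.2 (coneGen_subset_span s)) (Submodule.span_mono ?_)
  exact fun y hy => ⟨1, fun _ => 1, fun _ => y, fun _ => zero_le_one, fun _ => hy, by simp⟩

theorem eventually_ISet_subset (n : Fin N → EucSp J) (c : Fin N → ℝ) (x : EucSp J) :
    ∀ᶠ y in 𝓝 x, ISet n c y ⊆ ISet n c x := by
  have hcont : ∀ i, Continuous fun y : EucSp J => ⟪y, n i⟫ :=
    fun i => continuous_id.inner continuous_const
  have : ∀ i, ∀ᶠ y in 𝓝 x, ⟪y, n i⟫ = c i → ⟪x, n i⟫ = c i := by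
    intro i
    by_cases hi : ⟪x, n i⟫ = c i
    · exact Eventually.of_forall fun _ _ => hi
    · exact ((hcont i).continuousAt.eventually_ne hi).mono fun _ h h' => absurd h' h
  exact (eventually_all.2 this).mono fun _ h i => h i

theorem DrOn.sub {f g : ℝ → EucSp J} {T : ℝ≥0∞} (hf : DrOn f T) (hg : DrOn g T) :
    DrOn (fun t => f t - g t) T := by
  refine ⟨fun t ht hT => (hf.1 t ht hT).sub (hg.1 t ht hT), fun t ht hT => ?_⟩
  obtain ⟨L, hL⟩ := hf.2 t ht hT
  obtain ⟨L', hL'⟩ := hg.2 t ht hT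
  exact ⟨L - L', hL.sub hL'⟩

theorem DrOn.isBounded_image_Icc {f : ℝ → EucSp J} (hf : DrOn f ⊤) (T : ℝ) :
    Bornology.IsBounded (f '' Icc 0 T) := by
  refine isCompact_Icc.induction_on (p := fun s => Bornology.IsBounded (f '' s)) (by simp)
    (fun s t hst ht => ht.subset (image_mono hst))
    (fun s t hs ht => by rw [image_union]; exact hs.union ht) fun x hx => ?_
  suffices ∃ V, Bornology.IsBounded V ∧ ∀ᶠ s in 𝓝[Icc 0 T] x, f s ∈ V by
    obtain ⟨V, hV, hfV⟩ := this
    exact ⟨_, hfV, hV.subset (image_preimage_subset f V)⟩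
  have hright : ∀ᶠ s in 𝓝[≥] x, f s ∈ Metric.ball (f x) 1 :=
    (continuousWithinAt_Ioi_iff_Ici.1 (hf.1 x hx.1 (by simp))).eventually_mem
      (Metric.ball_mem_nhds _ one_pos)
  rcases hx.1.eq_or_lt with rfl | hx0
  · exact ⟨_, Metric.isBounded_ball, nhdsWithin_mono _ Icc_subset_Ici_self hright⟩
  · obtain ⟨L, hL⟩ := hf.2 x hx0 (by simp)
    have hnear : ∀ᶠ s in 𝓝 x, f s ∈ Metric.ball L 1 ∪ Metric.ball (f x) 1 := by
      rw [← nhdsLT_sup_nhdsGE]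
      exact eventually_sup.2 ⟨(hL.eventually_mem (Metric.ball_mem_nhds _ one_pos)).mono
        fun _ => Or.inl, hright.mono fun _ => Or.inr⟩
    exact ⟨_, Metric.isBounded_ball.union Metric.isBounded_ball, nhdsWithin_le_nhds hnear⟩

theorem norm_le_supNorm {f : ℝ → EucSp J} {T s : ℝ} (hf : Bornology.IsBounded (f '' Icc 0 T))
    (hs : s ∈ Icc 0 T) : ‖f s‖ ≤ supNorm f T := by
  obtain ⟨C, hC⟩ := isBounded_iff_forall_norm_le.1 hf
  exact le_ciSup (f := fun s : Icc (0 : ℝ) T => ‖f s.1‖)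
    ⟨C, by rintro _ ⟨u, rfl⟩; exact hC _ (mem_image_of_mem f u.2)⟩ ⟨s, hs⟩

theorem supNorm_nonneg (f : ℝ → EucSp J) (T : ℝ) : 0 ≤ supNorm f T :=
  Real.iSup_nonneg fun _ => norm_nonneg _

theorem supNorm_le {f : ℝ → EucSp J} {T a : ℝ} (h : ∀ s ∈ Icc 0 T, ‖f s‖ ≤ a) (ha : 0 ≤ a) :
    supNorm f T ≤ a :=
  Real.iSup_le (fun s => h s s.2) ha

theorem SolvesDPOn.sub {Z ψ₁ φ₁ η₁ ψ₂ φ₂ η₂ : ℝ → EucSp J} {T : ℝ≥0∞}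
    (h₁ : SolvesDPOn n c d Z ψ₁ φ₁ η₁ T) (h₂ : SolvesDPOn n c d Z ψ₂ φ₂ η₂ T) :
    SolvesDPOn n c d Z (fun t => ψ₁ t - ψ₂ t) (fun t => φ₁ t - φ₂ t) (fun t => η₁ t - η₂ t) T := by
  obtain ⟨hφ₁, hη₁, hη₁0, hpt₁, hinc₁⟩ := h₁
  obtain ⟨hφ₂, hη₂, hη₂0, hpt₂, hinc₂⟩ := h₂
  refine ⟨hφ₁.sub hφ₂, hη₁.sub hη₂, Submodule.sub_mem _ hη₁0 hη₂0, fun t ht hT => ?_,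
    fun s t hs hst hT => ?_⟩
  · obtain ⟨he₁, hH₁⟩ := hpt₁ t ht hT
    obtain ⟨he₂, hH₂⟩ := hpt₂ t ht hT
    refine ⟨by simp only [he₁, he₂]; abel, fun i hi => ?_⟩
    simp only [inner_sub_left, hH₁ i hi, hH₂ i hi, sub_zero]
  · simp only [sub_sub_sub_comm _ (η₂ t)]
    exact Submodule.sub_mem _ (hinc₁ s t hs hst hT) (hinc₂ s t hs hst hT)

theorem SolvesDPOn.exists_sub_mem_span {Z ψ φ η : ℝ → EucSp J}
    (h : SolvesDPOn n c d Z ψ φ η ⊤) (hZ : ContinuousOn Z (Ici 0)) {σ : ℝ} (hσ : 0 < σ) :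
    ∃ s ∈ Ico 0 σ, η s - η σ ∈ Submodule.span ℝ (d '' ISet n c (Z σ)) := by
  have hev : ∀ᶠ u in 𝓝[<] σ, ISet n c (Z u) ⊆ ISet n c (Z σ) := nhdsWithin_le_nhds
    ((hZ.continuousAt (Ici_mem_nhds hσ)).eventually (eventually_ISet_subset n c (Z σ)))
  obtain ⟨l, hl, hlsub⟩ := mem_nhdsLT_iff_exists_Ioo_subset.1 hev
  have hlσ : max l 0 < σ := max_lt hl hσ
  refine ⟨max l 0, ⟨le_max_right _ _, hlσ⟩, ?_⟩
  rw [← neg_sub, Submodule.neg_mem_iff]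
  refine Submodule.span_le.2 ?_ (h.2.2.2.2 _ _ (le_max_right _ _) hlσ (by simp))
  refine iUnion₂_subset fun u hu => (coneGen_subset_span _).trans (Submodule.span_mono ?_)
  refine image_mono ?_
  rcases hu.2.eq_or_lt with rfl | hlt
  · exact subset_rfl
  · exact hlsub ⟨(le_max_left _ _).trans_lt hu.1, hlt⟩

theorem SolvesDPOn.gauge_le_max {Z ψ φ η : ℝ → EucSp J} (h : SolvesDPOn n c d Z ψ φ η ⊤)
    (hZ : ContinuousOn Z (Ici 0)) (hn : ∀ i, ‖n i‖ = 1) {δ : ℝ} (hδ : 0 < δ)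
    {B : Set (EucSp J)} (hB : Convex ℝ B) (hB0 : B ∈ 𝓝 0)
    (hBcond : ∀ i, ∀ z ∈ frontier B, |⟪z, n i⟫| < δ →
      ∀ ν : EucSp J, ‖ν‖ = 1 → (∀ y ∈ B, 0 ≤ ⟪ν, y - z⟫) → ⟪ν, d i⟫ = 0)
    {t M : ℝ} (ht : 0 ≤ t) (hM : ∀ u ∈ Icc 0 t, ‖ψ t - ψ u‖ ≤ M) :
    gauge B (φ t) ≤ max (M / δ) (gauge B (ψ t)) := by
  have ⟨_, hηr, hη0, hpt, _⟩ := h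
  set A := gauge B (φ t)
  by_contra! hA
  rw [max_lt_iff, div_lt_iff₀ hδ] at hA
  obtain ⟨hMA, hψA⟩ := hA
  have hA0 : 0 < A := (gauge_nonneg _).trans_lt hψA
  set S := {s | s ∈ Icc 0 t ∧ A ≤ gauge B (ψ t + η s)}
  have htS : t ∈ S := ⟨⟨ht, le_rfl⟩, by rw [← (hpt t ht (by simp)).1]⟩
  have hstable : ∀ s ∈ S, ∀ w ∈ Submodule.span ℝ (d '' ISet n c (Z s)),
      A ≤ gauge B (ψ t + η s + w) := by
    rintro s ⟨hs, hAs⟩ w hw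
    obtain ⟨hφs, hHs⟩ := hpt s hs.1 (by simp)
    refine hAs.trans (gauge_le_gauge_add_of_mem_span n d hB hB0 hBcond
      (hA0.trans_le hAs) (fun i hi => ?_) hw)
    have hinner : ⟪ψ t + η s, n i⟫ = ⟪ψ t - ψ s, n i⟫ := by
      rw [show ψ t + η s = (ψ t - ψ s) + φ s by rw [hφs]; abel, inner_add_left, hHs i hi,
        add_zero]
    calc |⟪ψ t + η s, n i⟫| ≤ ‖ψ t - ψ s‖ := by
          simpa [hinner, hn i] using abs_real_inner_le_norm (ψ t - ψ s) (n i)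
      _ ≤ M := hM s hs
      _ < A * δ := hMA
      _ ≤ δ * gauge B (ψ t + η s) := by rw [mul_comm]; gcongr
  have hglb := isGLB_csInf ⟨t, htS⟩ ⟨0, fun s hs => hs.1.1⟩
  set σ := sInf S
  have hσ : σ ∈ Icc 0 t := ⟨hglb.2 fun s hs => hs.1.1, hglb.1 htS⟩
  have hσS : σ ∈ S := by
    refine ⟨hσ, hglb.le_of_continuousWithinAt_Ici ⟨t, htS⟩ ?_ fun s hs => hs.2⟩
    exact (continuous_gauge hB hB0).continuousAt.comp_continuousWithinAt
      (continuousWithinAt_const.add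
        (continuousWithinAt_Ioi_iff_Ici.1 (hηr.1 σ hσ.1 (by simp))))
  rcases hσ.1.eq_or_lt with hσ0 | hσpos
  · have hη0' : -η σ ∈ Submodule.span ℝ (d '' ISet n c (Z σ)) := by
      rw [Submodule.neg_mem_iff, ← hσ0, ← span_coneGen]
      exact hη0
    have := hstable σ hσS _ hη0'
    rw [add_neg_cancel_right] at this
    exact this.not_gt hψA
  · obtain ⟨s, hs, hsσ⟩ := h.exists_sub_mem_span hZ hσpos
    have hsS : s ∈ S := ⟨⟨hs.1, hs.2.le.trans hσ.2⟩, by simpa using hstable σ hσS _ hsσ⟩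
    exact (hglb.1 hsS).not_gt hs.2

theorem SolvesDPOn.norm_le {Z ψ φ η : ℝ → EucSp J} (h : SolvesDPOn n c d Z ψ φ η ⊤)
    (hZ : ContinuousOn Z (Ici 0)) (hn : ∀ i, ‖n i‖ = 1) {δ : ℝ} (hδ : 0 < δ)
    {B : Set (EucSp J)} (hB : Convex ℝ B)
    (hBcond : ∀ i, ∀ z ∈ frontier B, |⟪z, n i⟫| < δ →
      ∀ ν : EucSp J, ‖ν‖ = 1 → (∀ y ∈ B, 0 ≤ ⟪ν, y - z⟫) → ⟪ν, d i⟫ = 0)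
    {ρ R : ℝ} (hρ : 0 < ρ) (hR : 0 < R) (hρB : Metric.ball 0 ρ ⊆ B)
    (hBR : B ⊆ Metric.closedBall 0 R) {T M t : ℝ} (hM : ∀ u ∈ Icc 0 T, ‖ψ u‖ ≤ M)
    (ht : t ∈ Icc 0 T) : ‖φ t‖ ≤ R * (2 / δ + 1 / ρ) * M := by
  have hB0 : B ∈ 𝓝 0 := mem_of_superset (Metric.ball_mem_nhds 0 hρ) hρB
  have hM0 : 0 ≤ M := (norm_nonneg _).trans (hM t ht)
  have hosc : ∀ u ∈ Icc 0 t, ‖ψ t - ψ u‖ ≤ 2 * M := fun u hu =>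
    (norm_sub_le _ _).trans (by linarith [hM t ht, hM u ⟨hu.1, hu.2.trans ht.2⟩])
  have hψ : gauge B (ψ t) ≤ M / ρ := calc
    gauge B (ψ t) ≤ gauge (Metric.ball 0 ρ) (ψ t) :=
      gauge_mono (absorbent_nhds_zero (Metric.ball_mem_nhds 0 hρ)) hρB _
    _ = ‖ψ t‖ / ρ := gauge_ball hρ.le _
    _ ≤ M / ρ := by gcongr; exact hM t ht
  have hφ : ‖φ t‖ / R ≤ gauge B (φ t) := by
    rw [← gauge_closedBall hR.le]
    exact gauge_mono (absorbent_nhds_zero hB0) hBR _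
  calc ‖φ t‖ ≤ R * gauge B (φ t) := by rwa [div_le_iff₀' hR] at hφ
    _ ≤ R * max (2 * M / δ) (M / ρ) := by
      gcongr
      exact (h.gauge_le_max hZ hn hδ hB hB0 hBcond ht.1 hosc).trans (max_le_max le_rfl hψ)
    _ ≤ R * (2 * M / δ + M / ρ) := by
      gcongr
      exact max_le_add_of_nonneg (by positivity) (by positivity)
    _ = R * (2 / δ + 1 / ρ) * M := by ring

end DerivativeProblem

theorem statement9_general (J N : ℕ)
    (n d : Fin N → EucSp J) (c : Fin N → ℝ)
    (hn : ∀ i, ‖n i‖ = 1)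
    (hB : AssumptionB n d) :
    ∃ κΛ : ℝ, 0 < κΛ ∧
      ∀ X Z Y : ℝ → EucSp J, ContinuousOn X (Ici 0) → X 0 ∈ Gset n c →
        SolvesESP n c d X Z Y →
        (∀ ψ₁ ψ₂ φ₁ η₁ φ₂ η₂ : ℝ → EucSp J, DrOn ψ₁ ⊤ → DrOn ψ₂ ⊤ →
          SolvesDPOn n c d Z ψ₁ φ₁ η₁ ⊤ → SolvesDPOn n c d Z ψ₂ φ₂ η₂ ⊤ →
          ∀ T : ℝ, 0 ≤ T →
            supNorm (fun s => φ₁ s - φ₂ s) T ≤ κΛ * supNorm (fun s => ψ₁ s - ψ₂ s) T) ∧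
        (∀ ψ φ η φ' η' : ℝ → EucSp J, DrOn ψ ⊤ →
          SolvesDPOn n c d Z ψ φ η ⊤ → SolvesDPOn n c d Z ψ φ' η' ⊤ →
          EqOn φ φ' (Ici 0) ∧ EqOn η η' (Ici 0)) := by
  obtain ⟨δ, hδ, B, hBc, hB, -, hB0, hBcond⟩ := hB
  obtain ⟨ρ, hρ, hρB⟩ := Metric.mem_nhds_iff.1 (mem_interior_iff_mem_nhds.1 hB0)
  obtain ⟨R, hR, hBR⟩ := hBc.isBounded.subset_closedBall_lt 0 0
  refine ⟨R * (2 / δ + 1 / ρ), by positivity, fun X Z Y _ _ hESP => ⟨?_, ?_⟩⟩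
  · intro ψ₁ ψ₂ φ₁ η₁ φ₂ η₂ hψ₁ hψ₂ h₁ h₂ T _
    have hψ := (hψ₁.sub hψ₂).isBounded_image_Icc T
    refine supNorm_le (fun s hs => ?_) (mul_nonneg (by positivity) (supNorm_nonneg _ T))
    have hM : ∀ u ∈ Icc 0 T, ‖ψ₁ u - ψ₂ u‖ ≤ supNorm (fun s => ψ₁ s - ψ₂ s) T :=
      fun u hu => norm_le_supNorm (f := fun s => ψ₁ s - ψ₂ s) hψ hu
    exact (h₁.sub h₂).norm_le hESP.1 hn hδ hB hBcond hρ hR hρB hBR hM hs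
  · intro ψ φ η φ' η' _ h h'
    have hφ : EqOn φ φ' (Ici 0) := fun t ht => by
      have := (h.sub h').norm_le hESP.1 hn hδ hB hBcond hρ hR hρB hBR (M := 0) (by simp)
        ⟨ht, le_rfl⟩
      simpa [sub_eq_zero] using this
    refine ⟨hφ, fun t ht => ?_⟩
    have he := (h.2.2.2.1 t ht (by simp)).1
    rw [hφ ht, (h'.2.2.2.1 t ht (by simp)).1] at he
    exact add_left_cancel he.symm

/-- **Theorem (Lipschitz continuity of the derivative map).**
Under Assumption (B), there is `κ_Λ ∈ (0,∞)` such that for every ESP solution `(Z,Y)` and all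
DP solutions `(φ₁,η₁)`, `(φ₂,η₂)` associated with `Z` for `ψ₁, ψ₂ ∈ D_r`, we have
`‖φ₁ − φ₂‖_T ≤ κ_Λ ‖ψ₁ − ψ₂‖_T` for every `T ≥ 0`; in particular DP solutions are unique. -/
theorem statement9 (J N : ℕ) (hJ : 1 ≤ J) (hN : 1 ≤ N)
    (n d : Fin N → EucSp J) (c : Fin N → ℝ)
    (hn : ∀ i, ‖n i‖ = 1) (hdn : ∀ i, ⟪d i, n i⟫ = 1)
    (hGne : (Gset n c).Nonempty)
    (hB : AssumptionB n d) :
    ∃ κΛ : ℝ, 0 < κΛ ∧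
      ∀ X Z Y : ℝ → EucSp J, ContinuousOn X (Ici 0) → X 0 ∈ Gset n c →
        SolvesESP n c d X Z Y →
        (∀ ψ₁ ψ₂ φ₁ η₁ φ₂ η₂ : ℝ → EucSp J, DrOn ψ₁ ⊤ → DrOn ψ₂ ⊤ →
          SolvesDPOn n c d Z ψ₁ φ₁ η₁ ⊤ → SolvesDPOn n c d Z ψ₂ φ₂ η₂ ⊤ →
          ∀ T : ℝ, 0 ≤ T →
            supNorm (fun s => φ₁ s - φ₂ s) T ≤ κΛ * supNorm (fun s => ψ₁ s - ψ₂ s) T) ∧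
        (∀ ψ φ η φ' η' : ℝ → EucSp J, DrOn ψ ⊤ →
          SolvesDPOn n c d Z ψ φ η ⊤ → SolvesDPOn n c d Z ψ φ' η' ⊤ →
          EqOn φ φ' (Ici 0) ∧ EqOn η η' (Ici 0)) :=
  statement9_general J N n d c hn hB
end
end

section
/- Suppose the ESP data satisfies Assumption (B) and that {d_i : i ∈ I(x)} is linearly independent for every x ∈ ∂G. Then W* = ∅; that is, span(H_x ∪ d(x)) = ℝ^J for every x ∈ N*. -/
open scoped RealInnerProductSpace ENNReal NNReal
open Filter Topology Set MeasureTheory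

noncomputable section

/-! If `x ∈ W*`, counting dimensions (`dim H_x ≥ J - |I(x)|` and `dim span {dᵢ : i ∈ I(x)} = |I(x)|`)
gives a nonzero `w ∈ H_x ∩ span {dᵢ : i ∈ I(x)}`. The line `ℝ w` leaves the compact set `B`, so it
meets `∂B` at some `z` with `⟪z, nᵢ⟫ = 0` for `i ∈ I(x)`. By (B) an inward unit normal `ν` to `B` at
`z` is orthogonal to every active `dᵢ`, hence to `w` and to `z`; but `0 ∈ int B` forces
`⟪ν, z⟫ < 0`. -/

section InnerProductGeometry

variable {E : Type*} [NormedAddCommGroup E] [InnerProductSpace ℝ E]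

theorem exists_smul_mem_frontier_of_isBounded {B : Set E} (hB : Bornology.IsBounded B)
    (h0 : (0 : E) ∈ B) {w : E} (hw : w ≠ 0) : ∃ t : ℝ, t • w ∈ frontier B := by
  have hcont : Continuous fun t : ℝ => t • w := continuous_id.smul continuous_const
  obtain ⟨M, hM⟩ := hB.exists_norm_le
  have hescape : ((M + 1) / ‖w‖) • w ∉ B := fun h => by
    have := hM _ h
    rw [norm_smul, Real.norm_eq_abs, abs_div, abs_norm,
      div_mul_cancel₀ _ (norm_ne_zero_iff.2 hw)] at this
    linarith [le_abs_self (M + 1)]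
  have hne : ((fun t : ℝ => t • w) ⁻¹' B) ≠ univ :=
    ne_univ_iff_exists_notMem _ |>.2 ⟨(M + 1) / ‖w‖, hescape⟩
  obtain ⟨t, ht⟩ := nonempty_frontier_iff.2 ⟨⟨0, by simpa using h0⟩, hne⟩
  exact ⟨t, hcont.frontier_preimage_subset B ht⟩

theorem exists_inward_unit_normal_of_mem_frontier [CompleteSpace E] {B : Set E}
    (hconv : Convex ℝ B) (hint : (interior B).Nonempty) {z : E} (hz : z ∈ frontier B) :
    ∃ ν : E, ‖ν‖ = 1 ∧ ∀ y ∈ B, 0 ≤ ⟪ν, y - z⟫ := by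
  obtain ⟨f, u, hf0, hfB, hfz⟩ := geometric_hahn_banach_of_nonempty_interior hconv
    (convex_singleton z) (disjoint_singleton_right.2 hz.2) hint (singleton_nonempty z)
  set v := (InnerProductSpace.toDual ℝ E).symm f
  have hv : v ≠ 0 := by simpa [v] using hf0
  refine ⟨-(‖v‖⁻¹ • v), by simp [norm_smul, hv], fun y hy => ?_⟩
  have hfyz : f y ≤ f z := (hfB y hy).trans (hfz z rfl)
  rw [inner_neg_left, real_inner_smul_left, inner_sub_right, InnerProductSpace.toDual_symm_apply,
    InnerProductSpace.toDual_symm_apply, neg_nonneg]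
  exact mul_nonpos_of_nonneg_of_nonpos (by positivity) (by linarith)

theorem inner_neg_of_inward_normal {B : Set E} (h0 : (0 : E) ∈ interior B) {z ν : E}
    (hν : ν ≠ 0) (hnormal : ∀ y ∈ B, 0 ≤ ⟪ν, y - z⟫) : ⟪ν, z⟫ < 0 := by
  have hnear : ∀ᶠ s : ℝ in 𝓝[>] 0, -(s • ν) ∈ B := by
    have : Tendsto (fun s : ℝ => -(s • ν)) (𝓝 0) (𝓝 0) :=
      (by fun_prop : Continuous fun s : ℝ => -(s • ν)).tendsto' 0 0 (by simp)
    exact nhdsWithin_le_nhds (this.eventually (mem_interior_iff_mem_nhds.1 h0))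
  obtain ⟨s, hsB, hs⟩ := (hnear.and self_mem_nhdsWithin).exists
  have := hnormal _ hsB
  rw [inner_sub_right, inner_neg_right, real_inner_smul_right, real_inner_self_eq_norm_sq] at this
  nlinarith [mul_pos (mem_Ioi.1 hs) (pow_pos (norm_pos_iff.2 hν) 2)]

end InnerProductGeometry

theorem exists_ne_zero_mem_orthogonal_inf_span_of_sup_ne_top {𝕜 E ι : Type*} [RCLike 𝕜]
    [NormedAddCommGroup E] [InnerProductSpace 𝕜 E] [FiniteDimensional 𝕜 E] [Finite ι]
    (n : ι → E) {d : ι → E} (hd : LinearIndependent 𝕜 d)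
    (h : (Submodule.span 𝕜 (range n))ᗮ ⊔ Submodule.span 𝕜 (range d) ≠ ⊤) :
    ∃ w ∈ (Submodule.span 𝕜 (range n))ᗮ ⊓ Submodule.span 𝕜 (range d), w ≠ 0 := by
  cases nonempty_fintype ι
  set K := Submodule.span 𝕜 (range n)
  refine (Submodule.ne_bot_iff _).1 fun hbot => h (Submodule.eq_top_of_finrank_eq ?_)
  have hsum := Submodule.finrank_sup_add_finrank_inf_eq Kᗮ (Submodule.span 𝕜 (range d))
  have hK : Module.finrank 𝕜 K ≤ Fintype.card ι := finrank_range_le_card n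
  have hKperp := K.finrank_add_finrank_orthogonal
  have hle := Submodule.finrank_le (Kᗮ ⊔ Submodule.span 𝕜 (range d))
  rw [hbot, finrank_bot, finrank_span_eq_card hd] at hsum
  omega

theorem subset_coneGen {J : ℕ} (s : Set (EucSp J)) : s ⊆ coneGen s :=
  fun v hv => ⟨1, fun _ => 1, fun _ => v, fun _ => zero_le_one, fun _ => hv, by simp⟩

section ESP

variable {J N : ℕ} (n : Fin N → EucSp J) (c : Fin N → ℝ) (d : Fin N → EucSp J) (x : EucSp J)

theorem orthogonal_span_range_subset_Hset :
    ((Submodule.span ℝ (range fun i : ISet n c x => n i))ᗮ : Set (EucSp J)) ⊆ Hset n c x :=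
  fun _ hy i hi => Submodule.inner_left_of_mem_orthogonal
    (Submodule.subset_span (mem_range_self (f := fun j : ISet n c x => n j) ⟨i, hi⟩)) hy

theorem orthogonal_sup_span_le_span_Hset_union_dCone :
    (Submodule.span ℝ (range fun i : ISet n c x => n i))ᗮ ⊔
        Submodule.span ℝ (range fun i : ISet n c x => d i) ≤
      Submodule.span ℝ (Hset n c x ∪ dCone n c d x) := by
  refine sup_le (fun y hy => Submodule.subset_span (Or.inl ?_)) (Submodule.span_le.2 ?_)
  · exact orthogonal_span_range_subset_Hset n c x hy
  · rintro _ ⟨i, rfl⟩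
    exact Submodule.subset_span (Or.inr (subset_coneGen _ (mem_image_of_mem d i.2)))

end ESP

theorem statement12_general (J N : ℕ)
    (n d : Fin N → EucSp J) (c : Fin N → ℝ)
    (hB : AssumptionB n d)
    (hLI : ∀ x ∈ frontier (Gset n c),
      LinearIndependent ℝ (fun i : ISet n c x => d i.1)) :
    Wstar n c d = (∅ : Set (EucSp J)) := by
  refine eq_empty_iff_forall_notMem.2 fun x ⟨⟨hx, _⟩, hspan⟩ => ?_
  obtain ⟨w, ⟨hwH, hwD⟩, hw0⟩ := exists_ne_zero_mem_orthogonal_inf_span_of_sup_ne_top _ (hLI x hx)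
    fun htop => hspan (eq_top_iff.2 (htop ▸ orthogonal_sup_span_le_span_Hset_union_dCone n c d x))
  obtain ⟨δ, hδ, B, hBc, hBconv, -, h0, hBd⟩ := hB
  obtain ⟨t, hz⟩ := exists_smul_mem_frontier_of_isBounded hBc.isBounded (interior_subset h0) hw0
  obtain ⟨ν, hν1, hνB⟩ := exists_inward_unit_normal_of_mem_frontier hBconv ⟨0, h0⟩ hz
  have hzn : ∀ i ∈ ISet n c x, ⟪t • w, n i⟫ = 0 := fun i hi => by
    rw [real_inner_smul_left, orthogonal_span_range_subset_Hset n c x hwH i hi, mul_zero]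
  have hνd : ∀ i ∈ ISet n c x, ⟪ν, d i⟫ = 0 := fun i hi =>
    hBd i _ hz (by rw [hzn i hi, abs_zero]; exact hδ) ν hν1 hνB
  have hνw : ⟪w, ν⟫ = 0 := by
    refine (Submodule.isOrtho_span.2 ?_).inner_eq hwD (Submodule.mem_span_singleton_self ν)
    rintro _ ⟨i, rfl⟩ _ rfl
    rw [real_inner_comm, hνd i i.2]
  have hνz := inner_neg_of_inward_normal h0 (norm_ne_zero_iff.1 (by simp [hν1])) hνB
  rw [real_inner_smul_right, real_inner_comm, hνw, mul_zero] at hνz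
  exact lt_irrefl 0 hνz

/-- **Lemma (`W*` is empty under linear independence).**
Under Assumption (B) and linear independence of `{dᵢ : i ∈ I(x)}` for every `x ∈ ∂G`,
the set `W*` is empty. -/
theorem statement12 (J N : ℕ) (hJ : 1 ≤ J) (hN : 1 ≤ N)
    (n d : Fin N → EucSp J) (c : Fin N → ℝ)
    (hn : ∀ i, ‖n i‖ = 1) (hdn : ∀ i, ⟪d i, n i⟫ = 1)
    (hGne : (Gset n c).Nonempty)
    (hB : AssumptionB n d)
    (hLI : ∀ x ∈ frontier (Gset n c),
      LinearIndependent ℝ (fun i : ISet n c x => d i.1)) :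
    Wstar n c d = (∅ : Set (EucSp J)) :=
  statement12_general J N n d c hB hLI
end
end
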